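/- Let F : ℝ² → ℝ be F(x,y) = cos x + 1 − cos(4y) + cos(2y). For real numbers x and y, the three conditions F(x,y) = 0, sin x = 0 and 4·sin(4y) − 2·sin(2y) = 0 hold simultaneously if and only if either (x ∈ 2πℤ and y ∈ π/2 + πℤ) or (x ∈ π + 2πℤ and y ∈ πℤ). -/
import Mathlib
open Real

noncomputable def F (x y : ℝ) : ℝ := Real.cos x + 1 - Real.cos (4 * y) + Real.cos (2 * y)

/-- For real `x, y`, the conditions `F(x,y) = 0`, `sin x = 0` and
`4 sin(4y) - 2 sin(2y) = 0` hold simultaneously iff either (`x ∈ 2πℤ` and `y ∈ π/2 + πℤ`)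
or (`x ∈ π + 2πℤ` and `y ∈ πℤ`). -/
theorem singular_points_of_characteristic_variety (x y : ℝ) :
    (F x y = 0 ∧ Real.sin x = 0 ∧ 4 * Real.sin (4 * y) - 2 * Real.sin (2 * y) = 0) ↔
      ((∃ n : ℤ, x = 2 * Real.pi * n) ∧ (∃ n : ℤ, y = Real.pi / 2 + Real.pi * n)) ∨
      ((∃ n : ℤ, x = Real.pi + 2 * Real.pi * n) ∧ (∃ n : ℤ, y = Real.pi * n)) := by
  constructor
  · rintro ⟨hF, hx, hy⟩
    -- sin(4y) = 2 sin(2y) cos(2y)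
    have h4 : Real.sin (4 * y) = 2 * Real.sin (2 * y) * Real.cos (2 * y) := by
      have : (4 : ℝ) * y = 2 * (2 * y) := by ring
      rw [this, Real.sin_two_mul]
    rw [h4] at hy
    have hy' : 2 * Real.sin (2 * y) * (4 * Real.cos (2 * y) - 1) = 0 := by linarith
    have hcx : Real.cos x = 1 ∨ Real.cos x = -1 := Real.sin_eq_zero_iff_cos_eq.mp hx
    rcases mul_eq_zero.mp hy' with h | h
    · -- sin(2y) = 0
      have hs : Real.sin (2 * y) = 0 := by linarith
      have hcy : Real.cos (2 * y) = 1 ∨ Real.cos (2 * y) = -1 :=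
        Real.sin_eq_zero_iff_cos_eq.mp hs
      have hc4 : Real.cos (4 * y) = 2 * Real.cos (2 * y) ^ 2 - 1 := by
        have : (4 : ℝ) * y = 2 * (2 * y) := by ring
        rw [this, Real.cos_two_mul]
      unfold F at hF
      rw [hc4] at hF
      rcases hcy with hcy | hcy
      · -- cos 2y = 1 ⟹ cos x = -1
        rw [hcy] at hF
        have hcx' : Real.cos x = -1 := by nlinarith
        right
        constructor
        · -- x = π + 2πn
          have : Real.cos (x - Real.pi) = 1 := by
            rw [Real.cos_sub, Real.cos_pi, Real.sin_pi]; nlinarith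
          obtain ⟨n, hn⟩ := (Real.cos_eq_one_iff _).mp this
          exact ⟨n, by linarith [hn]⟩
        · obtain ⟨n, hn⟩ := (Real.cos_eq_one_iff _).mp hcy
          exact ⟨n, by linarith [hn]⟩
      · -- cos 2y = -1 ⟹ cos x = 1
        rw [hcy] at hF
        have hcx' : Real.cos x = 1 := by nlinarith
        left
        constructor
        · obtain ⟨n, hn⟩ := (Real.cos_eq_one_iff _).mp hcx'
          exact ⟨n, by linarith [hn]⟩
        · have : Real.cos (2 * y - Real.pi) = 1 := by
            rw [Real.cos_sub, Real.cos_pi, Real.sin_pi]; nlinarith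
          obtain ⟨n, hn⟩ := (Real.cos_eq_one_iff _).mp this
          exact ⟨n, by linarith [hn]⟩
    · -- cos 2y = 1/4, contradiction
      exfalso
      have hc : Real.cos (2 * y) = 1/4 := by linarith
      have hc4 : Real.cos (4 * y) = 2 * Real.cos (2 * y) ^ 2 - 1 := by
        have : (4 : ℝ) * y = 2 * (2 * y) := by ring
        rw [this, Real.cos_two_mul]
      unfold F at hF
      rcases hcx with hcx | hcx <;> rw [hcx, hc4, hc] at hF <;> norm_num at hF
  · rintro (⟨⟨n, rfl⟩, ⟨m, rfl⟩⟩ | ⟨⟨n, rfl⟩, ⟨m, rfl⟩⟩)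
    · refine ⟨?_, ?_, ?_⟩
      · unfold F
        have h1 : Real.cos (2 * Real.pi * n) = 1 := by
          have : 2 * Real.pi * (n : ℝ) = (n : ℝ) * (2 * Real.pi) := by ring
          rw [this, Real.cos_int_mul_two_pi]
        have h2 : Real.cos (4 * (Real.pi / 2 + Real.pi * m)) = 1 := by
          have : 4 * (Real.pi / 2 + Real.pi * (m : ℝ)) = ((2 * m + 1 : ℤ) : ℝ) * (2 * Real.pi) := by
            push_cast; ring
          rw [this, Real.cos_int_mul_two_pi]
        have h3 : Real.cos (2 * (Real.pi / 2 + Real.pi * m)) = -1 := by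
          have : 2 * (Real.pi / 2 + Real.pi * (m : ℝ)) = (m : ℝ) * (2 * Real.pi) + Real.pi := by
            ring
          rw [this, Real.cos_add, Real.cos_int_mul_two_pi, Real.sin_pi, Real.cos_pi]; ring
        rw [h1, h2, h3]; ring
      · have : 2 * Real.pi * (n : ℝ) = ((2 * n : ℤ) : ℝ) * Real.pi := by push_cast; ring
        rw [this]; exact Real.sin_int_mul_pi _
      · have h1 : Real.sin (4 * (Real.pi / 2 + Real.pi * m)) = 0 := by
          have : 4 * (Real.pi / 2 + Real.pi * (m : ℝ)) = ((2 + 4 * m : ℤ) : ℝ) * Real.pi := by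
            push_cast; ring
          rw [this]; exact Real.sin_int_mul_pi _
        have h2 : Real.sin (2 * (Real.pi / 2 + Real.pi * m)) = 0 := by
          have : 2 * (Real.pi / 2 + Real.pi * (m : ℝ)) = ((1 + 2 * m : ℤ) : ℝ) * Real.pi := by
            push_cast; ring
          rw [this]; exact Real.sin_int_mul_pi _
        rw [h1, h2]; ring
    · refine ⟨?_, ?_, ?_⟩
      · unfold F
        have h1 : Real.cos (Real.pi + 2 * Real.pi * n) = -1 := by
          have : Real.pi + 2 * Real.pi * (n : ℝ) = (n : ℝ) * (2 * Real.pi) + Real.pi := by ring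
          rw [this, Real.cos_add, Real.cos_int_mul_two_pi, Real.sin_pi, Real.cos_pi]; ring
        have h2 : Real.cos (4 * (Real.pi * m)) = 1 := by
          have : 4 * (Real.pi * (m : ℝ)) = ((2 * m : ℤ) : ℝ) * (2 * Real.pi) := by push_cast; ring
          rw [this, Real.cos_int_mul_two_pi]
        have h3 : Real.cos (2 * (Real.pi * m)) = 1 := by
          have : 2 * (Real.pi * (m : ℝ)) = (m : ℝ) * (2 * Real.pi) := by ring
          rw [this, Real.cos_int_mul_two_pi]
        rw [h1, h2, h3]; ring
      · have : Real.pi + 2 * Real.pi * (n : ℝ) = ((1 + 2 * n : ℤ) : ℝ) * Real.pi := by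
          push_cast; ring
        rw [this]; exact Real.sin_int_mul_pi _
      · have h1 : Real.sin (4 * (Real.pi * m)) = 0 := by
          have : 4 * (Real.pi * (m : ℝ)) = ((4 * m : ℤ) : ℝ) * Real.pi := by push_cast; ring
          rw [this]; exact Real.sin_int_mul_pi _
        have h2 : Real.sin (2 * (Real.pi * m)) = 0 := by
          have : 2 * (Real.pi * (m : ℝ)) = ((2 * m : ℤ) : ℝ) * Real.pi := by push_cast; ring
          rw [this]; exact Real.sin_int_mul_pi _
        rw [h1, h2]; ring
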